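/- arXiv:1610.02190 — 3 statements merged into one kernel-verified Lean document; each statement's English description precedes it below -/
import Mathlib

section
/- If (μ_t)_{t≥0} is a family of integrable probability measures with negative means which is non-decreasing in the WDS order, then it is non-decreasing in the decreasing convex order; that is, for every s ≤ t and every x ∈ ℝ, E[(x − X_s)⁺] ≤ E[(x − X_t)⁺] where X_v has law μ_v. -/
open MeasureTheory Set Filter

noncomputable def meanM (μ : Measure ℝ) : ℝ := ∫ y, y ∂μ

noncomputable def rSupE (μ : Measure ℝ) : EReal :=
  sInf ((fun z : ℝ => (z : EReal)) '' {z : ℝ | μ (Ici z) = 0})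

noncomputable def psiWds (μ : Measure ℝ) (x : ℝ) : EReal :=
  if (x : EReal) < rSupE μ then
    ((((∫ y in Ici x, y ∂μ) - meanM μ) / (μ (Ici x)).toReal : ℝ) : EReal)
  else ⊤

noncomputable def Kfun (μ : Measure ℝ) (x : ℝ) : ℝ :=
  (∫ y in Ici x, (y - x) ∂μ) - meanM μ

/-!
Write `P_μ(x) = E[(x - X)⁺] = x + K_μ(x)` with `K_μ(x) = E[(X - x)⁺] - m_μ > 0`, so that
`Ψ_μ(x) = x + K_μ(x) / μ[x, ∞)`, and `P_μ` is 1-Lipschitz with derivative `μ(-∞, x)`.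
At a point where `h = P_s - P_t` is positive we have `0 < K_t < K_s`, which together with
`Ψ_s ≤ Ψ_t` forces `μ_t[u, ∞) ≤ μ_s[u, ∞)` (beyond the right end of `μ_t` this is trivial).
Hence `h` is non-increasing wherever it is positive; since `h → 0` at `-∞`, it never is.
-/

open scoped Topology

noncomputable def putPrice (μ : Measure ℝ) (x : ℝ) : ℝ := ∫ y, max (x - y) 0 ∂μ

section OneMeasure

variable {μ : Measure ℝ}

lemma integrable_max_sub_zero [IsFiniteMeasure μ] (hμ : Integrable (fun y : ℝ => y) μ) (x : ℝ) :
    Integrable (fun y => max (x - y) 0) μ :=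
  ((integrable_const x).sub hμ).sup (integrable_zero _ _ _)

lemma putPrice_eq_add_Kfun [IsProbabilityMeasure μ] (hμ : Integrable (fun y : ℝ => y) μ) (x : ℝ) :
    putPrice μ x = x + Kfun μ x := by
  have hcall : ∫ y in Ici x, (y - x) ∂μ = ∫ y, max (y - x) 0 ∂μ := by
    rw [← integral_indicator measurableSet_Ici]
    congr 1 with y
    rcases le_or_gt x y with hy | hy
    · simp [hy]
    · simp [indicator_of_notMem (notMem_Ici.mpr hy), hy.le]
  have hcall_int : Integrable (fun y => max (y - x) 0) μ :=
    (hμ.sub (integrable_const x)).sup (integrable_zero _ _ _)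
  calc putPrice μ x = ∫ y, ((x - y) + max (y - x) 0) ∂μ := by
        unfold putPrice; congr 1 with y
        have := max_zero_sub_max_neg_zero_eq_self (x - y)
        rw [neg_sub] at this
        linarith
    _ = x + Kfun μ x := by
        rw [integral_add (f := fun y => x - y) ((integrable_const x).sub hμ) hcall_int,
          integral_sub (integrable_const x) hμ, integral_const, probReal_univ, one_smul, Kfun,
          hcall, meanM]
        ring

lemma Kfun_pos (hm : meanM μ < 0) (x : ℝ) : 0 < Kfun μ x := by
  have : 0 ≤ ∫ y in Ici x, (y - x) ∂μ :=
    setIntegral_nonneg measurableSet_Ici fun y hy => sub_nonneg.mpr hy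
  rw [Kfun]; linarith

lemma setIntegral_Ici_sub_meanM [IsFiniteMeasure μ] (hμ : Integrable (fun y : ℝ => y) μ) (x : ℝ) :
    (∫ y in Ici x, y ∂μ) - meanM μ = Kfun μ x + x * μ.real (Ici x) := by
  rw [Kfun, integral_sub hμ.integrableOn (integrableOn_const (measure_ne_top _ _)),
    setIntegral_const, smul_eq_mul]
  ring

lemma measure_Ici_ne_zero_of_lt_rSupE {x : ℝ} (hx : (x : EReal) < rSupE μ) : μ (Ici x) ≠ 0 :=
  fun h => (sInf_le ⟨x, h, rfl⟩ : rSupE μ ≤ x).not_gt hx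

lemma measure_Ici_eq_zero_of_rSupE_lt {x : ℝ} (hx : rSupE μ < x) : μ (Ici x) = 0 := by
  obtain ⟨_, ⟨w, hw, rfl⟩, hwx⟩ := sInf_lt_iff.mp hx
  exact measure_mono_null (Ici_subset_Ici.mpr (EReal.coe_lt_coe_iff.mp hwx).le) hw

lemma measureReal_Iio_eq_one_sub [IsProbabilityMeasure μ] (x : ℝ) :
    μ.real (Iio x) = 1 - μ.real (Ici x) := by
  rw [← compl_Ici, probReal_compl_eq_one_sub measurableSet_Ici]

lemma putPrice_le_add_abs [IsProbabilityMeasure μ] (hμ : Integrable (fun y : ℝ => y) μ) (a b : ℝ) :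
    putPrice μ a ≤ putPrice μ b + |a - b| := by
  have hle : ∀ y, max (a - y) 0 ≤ max (b - y) 0 + |a - b| := fun y => by
    have := abs_max_sub_max_le_abs (a - y) (b - y) 0
    rw [sub_sub_sub_cancel_right] at this
    linarith [le_abs_self (max (a - y) 0 - max (b - y) 0)]
  calc putPrice μ a ≤ ∫ y, (max (b - y) 0 + |a - b|) ∂μ :=
        integral_mono (integrable_max_sub_zero hμ a)
          ((integrable_max_sub_zero hμ b).add (integrable_const _)) hle
    _ = putPrice μ b + |a - b| := by
        rw [integral_add (integrable_max_sub_zero hμ b) (integrable_const _)]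
        simp [putPrice]

lemma continuous_putPrice [IsProbabilityMeasure μ] (hμ : Integrable (fun y : ℝ => y) μ) :
    Continuous (putPrice μ) :=
  (LipschitzWith.of_le_add_mul 1 fun a b => by
    simpa [Real.dist_eq] using putPrice_le_add_abs hμ a b).continuous

lemma tendsto_putPrice_atBot [IsFiniteMeasure μ] (hμ : Integrable (fun y : ℝ => y) μ) :
    Tendsto (putPrice μ) atBot (𝓝 0) := by
  have hlim := tendsto_integral_filter_of_dominated_convergence (μ := μ) (l := atBot)
    (F := fun x y => max (x - y) 0) (f := fun _ => 0) (fun y => max (0 - y) 0)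
    (Eventually.of_forall fun x => (integrable_max_sub_zero hμ x).aestronglyMeasurable)
    (eventually_le_atBot 0 |>.mono fun x hx => Eventually.of_forall fun y => by
      rw [Real.norm_of_nonneg (le_max_right _ _)]
      exact max_le_max (by linarith) le_rfl)
    (integrable_max_sub_zero hμ 0)
    (Eventually.of_forall fun y => tendsto_const_nhds.congr' <|
      (eventually_le_atBot y).mono fun x hx => (max_eq_right (by linarith)).symm)
  rwa [integral_zero] at hlim

lemma putPrice_sub_putPrice [IsFiniteMeasure μ] (hμ : Integrable (fun y : ℝ => y) μ) {c d : ℝ}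
    (hcd : c ≤ d) :
    putPrice μ d - putPrice μ c = ∫ u in Ioc c d, μ.real (Iio u) := by
  have hpoint : ∀ y, max (d - y) 0 - max (c - y) 0 = ∫ u in Ioc c d, (Ioi y).indicator 1 u := by
    intro y
    rw [integral_indicator_one measurableSet_Ioi, measureReal_restrict_apply measurableSet_Ioi,
      inter_comm, Ioc_inter_Ioi, Real.volume_real_Ioc]
    grind
  have hinner : ∀ u, ∫ y, (Ioi y).indicator (1 : ℝ → ℝ) u ∂μ = μ.real (Iio u) := by
    intro u
    rw [← integral_indicator_one measurableSet_Iio]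
    congr 1 with y
  have hswap : Integrable (Function.uncurry fun y u => (Ioi y).indicator (1 : ℝ → ℝ) u)
      (μ.prod (volume.restrict (Ioc c d))) := by
    have : Function.uncurry (fun y u => (Ioi y).indicator (1 : ℝ → ℝ) u)
        = {p : ℝ × ℝ | p.1 < p.2}.indicator 1 := by
      ext ⟨y, u⟩
      by_cases h : y < u <;> simp [h]
    rw [this]
    exact (integrable_const 1).indicator (measurableSet_lt measurable_fst measurable_snd)
  rw [putPrice, putPrice,
    ← integral_sub (integrable_max_sub_zero hμ d) (integrable_max_sub_zero hμ c)]
  simp_rw [hpoint, ← hinner]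
  exact integral_integral_swap hswap

lemma monotone_measureReal_Iio [IsFiniteMeasure μ] : Monotone fun u => μ.real (Iio u) :=
  fun _ _ h => measureReal_mono (Iio_subset_Iio h)

end OneMeasure

section TwoMeasures

variable {μ ν : Measure ℝ} [IsProbabilityMeasure μ] [IsProbabilityMeasure ν]

lemma measureReal_Ici_le_of_psiWds_le (hμ : Integrable (fun y : ℝ => y) μ)
    (hν : Integrable (fun y : ℝ => y) ν) (hmν : meanM ν < 0) {u : ℝ} (hu : (u : EReal) < rSupE ν)
    (hpsi : psiWds μ u ≤ psiWds ν u) (hK : Kfun ν u ≤ Kfun μ u) :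
    ν.real (Ici u) ≤ μ.real (Ici u) := by
  have huμ : (u : EReal) < rSupE μ := by
    by_contra h
    simp [psiWds, hu, h] at hpsi
  simp only [psiWds, if_pos hu, if_pos huμ, EReal.coe_le_coe_iff, ← measureReal_def,
    setIntegral_Ici_sub_meanM hμ, setIntegral_Ici_sub_meanM hν] at hpsi
  have hF : 0 < μ.real (Ici u) :=
    ENNReal.toReal_pos (measure_Ici_ne_zero_of_lt_rSupE huμ) (measure_ne_top _ _)
  have hG : 0 < ν.real (Ici u) :=
    ENNReal.toReal_pos (measure_Ici_ne_zero_of_lt_rSupE hu) (measure_ne_top _ _)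
  -- `psiWds` at `u` is `u + Kfun / (mass of [u, ∞))`
  have hcross : Kfun μ u * ν.real (Ici u) ≤ Kfun ν u * μ.real (Ici u) := by
    have := (div_le_div_iff₀ hF hG).mp hpsi
    nlinarith
  have := Kfun_pos hmν u
  nlinarith

lemma measureReal_Iio_le_of_putPrice_le (hμ : Integrable (fun y : ℝ => y) μ)
    (hν : Integrable (fun y : ℝ => y) ν) (hmν : meanM ν < 0) {u : ℝ} (hu : (u : EReal) ≠ rSupE ν)
    (hpsi : psiWds μ u ≤ psiWds ν u) (hput : putPrice ν u ≤ putPrice μ u) :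
    μ.real (Iio u) ≤ ν.real (Iio u) := by
  rw [measureReal_Iio_eq_one_sub, measureReal_Iio_eq_one_sub, sub_le_sub_iff_left]
  rcases hu.lt_or_gt with hu | hu
  · rw [putPrice_eq_add_Kfun hμ, putPrice_eq_add_Kfun hν, add_le_add_iff_left] at hput
    exact measureReal_Ici_le_of_psiWds_le hμ hν hmν hu hpsi hput
  · simp [measureReal_def, measure_Ici_eq_zero_of_rSupE_lt hu]

end TwoMeasures

lemma nonpos_of_tendsto_atBot_of_le_of_forall_pos {h : ℝ → ℝ} (hcont : Continuous h)
    (hlim : Tendsto h atBot (𝓝 0)) {z : ℝ}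
    (hdec : ∀ c ≤ z, (∀ u ∈ Ioc c z, 0 < h u) → h z ≤ h c) : h z ≤ 0 := by
  by_contra! hz
  obtain ⟨c₀, hc₀, hc₀z⟩ := ((hlim.eventually (gt_mem_nhds hz)).and (eventually_le_atBot z)).exists
  set a := max (h c₀) 0
  -- the last point before `z` where `h` is at most `a`
  set S := Icc c₀ z ∩ {w | h w ≤ a}
  have hS : IsClosed S := isClosed_Icc.inter (isClosed_le hcont continuous_const)
  have hSbdd : BddAbove S := bddAbove_Icc.mono inter_subset_left
  have hcS : sSup S ∈ S := hS.csSup_mem ⟨c₀, ⟨le_rfl, hc₀z⟩, le_max_left (h c₀) 0⟩ hSbdd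
  have hpos : ∀ u ∈ Ioc (sSup S) z, 0 < h u := fun u hu => by
    by_contra! hu0
    have huS : u ∈ S := ⟨⟨hcS.1.1.trans hu.1.le, hu.2⟩, hu0.trans (le_max_right _ _)⟩
    exact (le_csSup hSbdd huS).not_gt hu.1
  have ha : a < h z := max_lt hc₀ hz
  exact ((hdec _ hcS.1.2 hpos).trans hcS.2).not_gt ha

lemma ae_coe_ne_ereal (r : EReal) : ∀ᵐ u : ℝ, (u : EReal) ≠ r := by
  have : ({u : ℝ | (u : EReal) = r}).Subsingleton := fun a ha b hb =>
    EReal.coe_injective (ha.trans hb.symm)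
  simpa [ae_iff] using this.measure_zero volume

theorem stmt7 (μ : ℝ → Measure ℝ)
    (hprob : ∀ t, 0 ≤ t → IsProbabilityMeasure (μ t))
    (hint : ∀ t, 0 ≤ t → Integrable (fun y : ℝ => y) (μ t))
    (hneg : ∀ t, 0 ≤ t → meanM (μ t) < 0)
    (hwds : ∀ s t, 0 ≤ s → s ≤ t → ∀ x : ℝ, psiWds (μ s) x ≤ psiWds (μ t) x) :
    ∀ s t, 0 ≤ s → s ≤ t → ∀ x : ℝ,
      (∫ y, max (x - y) 0 ∂(μ s)) ≤ ∫ y, max (x - y) 0 ∂(μ t) := by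
  intro s t hs hst x
  have ht := hs.trans hst
  have := hprob s hs
  have := hprob t ht
  have hμs := hint s hs
  have hμt := hint t ht
  change putPrice (μ s) x ≤ putPrice (μ t) x
  rw [← sub_nonpos]
  refine nonpos_of_tendsto_atBot_of_le_of_forall_pos
    (h := fun w => putPrice (μ s) w - putPrice (μ t) w)
    ((continuous_putPrice hμs).sub (continuous_putPrice hμt))
    (by simpa using (tendsto_putPrice_atBot hμs).sub (tendsto_putPrice_atBot hμt))
    fun c hcx hpos => ?_
  beta_reduce at hpos ⊢
  rw [← sub_nonpos, sub_sub_sub_comm, putPrice_sub_putPrice hμs hcx,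
    putPrice_sub_putPrice hμt hcx, sub_nonpos]
  refine setIntegral_mono_ae_restrict monotone_measureReal_Iio.intervalIntegrable.1
    monotone_measureReal_Iio.intervalIntegrable.1 ?_
  filter_upwards [ae_restrict_mem measurableSet_Ioc, ae_restrict_of_ae (ae_coe_ne_ereal _)]
    with u hu hur
  exact measureReal_Iio_le_of_putPrice_le hμs hμt (hneg t ht) hur (hwds s t hs hst u)
    (sub_pos.mp (hpos u hu)).le
end

section
/- Let (μ_t)_{t≥0} be a family of integrable probability measures with negative means, non-decreasing in the WDS order. If the mean m_t = ∫ y dμ_t(y) is constant in t, then μ_s = μ_t for all s, t ≥ 0. -/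
open MeasureTheory Set Filter

open Topology
open scoped NNReal

/-
For `Y ∼ μ` with mean `m < 0`, `Kfun μ x = E (Y - x)⁺ - m` is at least `-m > 0`, has left
derivative `-μ [x, ∞)`, and `Ψ_μ (x) = Kfun μ x / μ [x, ∞) + x` below the top of the support of `μ`.
Hence for `s ≤ t` the WDS inequality says that the left derivative of `Kfun μ_t / Kfun μ_s` is
nonnegative (except possibly at the top of the support of `μ_t`), so this ratio is nondecreasing.
It tends to `1` at `-∞`, where both functions are `-x + o(1)`, and, the means being equal, to `1`
at `+∞`. So the two functions coincide, and differentiating gives `μ_s [x, ∞) = μ_t [x, ∞)`.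
-/
theorem le_of_hasDerivWithinAt_Iic_nonneg {g g' : ℝ → ℝ} {a b : ℝ} (hab : a ≤ b)
    (hg : ContinuousOn g (Icc a b)) (hd : ∀ x ∈ Ioc a b, HasDerivWithinAt g (g' x) (Iic x) x)
    (hg' : ∀ x ∈ Ioc a b, 0 ≤ g' x) : g a ≤ g b := by
  have hneg : ∀ u ∈ Icc (-b) (-a), -u ∈ Icc a b := fun u hu =>
    ⟨by linarith [hu.2], by linarith [hu.1]⟩
  have hneg' : ∀ u ∈ Ico (-b) (-a), -u ∈ Ioc a b := fun u hu =>
    ⟨by linarith [hu.2], by linarith [hu.1]⟩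
  -- `u ↦ g (-u)` has nonpositive right derivatives on `[-b, -a)`, so it stays below `g b`
  refine image_le_of_deriv_right_le_deriv_boundary (f := fun u => g (-u)) (f' := fun u => -g' (-u))
    (hg.comp continuousOn_neg hneg) (fun u hu => ?_) (B := fun _ => g b) (B' := 0) (by simp)
    continuousOn_const (fun u _ => hasDerivWithinAt_const u _ _) (fun u hu => ?_)
    (x := -a) ⟨by linarith, le_rfl⟩ |>.trans_eq' (by simp)
  · have := (hd _ (hneg' u hu)).comp u ((hasDerivAt_neg u).hasDerivWithinAt (s := Ici u))
      (fun v (hv : u ≤ v) => neg_le_neg hv)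
    rw [mul_neg_one] at this
    exact this
  · simpa using hg' _ (hneg' u hu)

theorem monotone_of_hasDerivWithinAt_Iic_nonneg {g g' : ℝ → ℝ} {s : Set ℝ} (hg : Continuous g)
    (hs : s.Subsingleton) (hd : ∀ x ∉ s, HasDerivWithinAt g (g' x) (Iic x) x)
    (hg' : ∀ x ∉ s, 0 ≤ g' x) : Monotone g := by
  have hIcc : ∀ a b, a ≤ b → Disjoint (Ioc a b) s → g a ≤ g b := fun a b hab hdisj =>
    le_of_hasDerivWithinAt_Iic_nonneg hab hg.continuousOn
      (fun x hx => hd x (hdisj.notMem_of_mem_left hx))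
      (fun x hx => hg' x (hdisj.notMem_of_mem_left hx))
  obtain rfl | ⟨c, rfl⟩ := hs.eq_empty_or_singleton
  · exact fun a b hab => hIcc a b hab (disjoint_empty _)
  have hIio : MonotoneOn g (Iio c) := fun a _ b hb hab =>
    hIcc a b hab (disjoint_singleton_right.2 fun hc => hc.2.not_gt hb)
  have hIic : MonotoneOn g (Iic c) := by
    intro a ha b hb hab
    obtain hb | rfl := (mem_Iic.1 hb).lt_or_eq
    · exact hIio (hab.trans_lt hb) hb hab
    obtain ha | rfl := (mem_Iic.1 ha).lt_or_eq
    · refine ge_of_tendsto ((hg.tendsto b).mono_left (nhdsWithin_le_nhds (s := Iio b))) ?_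
      filter_upwards [Ioo_mem_nhdsLT ha] with z hz using hIio ha hz.2 hz.1.le
    · exact le_rfl
  exact hIic.Iic_union_Ici fun a ha b _ hab =>
    hIcc a b hab (disjoint_singleton_right.2 fun hc => hc.1.not_ge ha)

theorem hasDerivWithinAt_integral_of_lipschitzWith {α : Type*} [MeasurableSpace α]
    {μ : Measure α} [IsFiniteMeasure μ] {F : ℝ → α → ℝ} {F' : α → ℝ} {s : Set ℝ} {x : ℝ}
    {C : ℝ≥0} (hF_meas : ∀ z, AEStronglyMeasurable (F z) μ) (hF_int : Integrable (F x) μ)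
    (hF_lip : ∀ a, LipschitzWith C (F · a))
    (hF' : ∀ a, HasDerivWithinAt (F · a) (F' a) s x) :
    HasDerivWithinAt (fun z => ∫ a, F z a ∂μ) (∫ a, F' a ∂μ) s x := by
  have hF_int' : ∀ z, Integrable (F z) μ := fun z =>
    ((hF_int.norm.add (integrable_const (C * dist z x)))).mono' (hF_meas z)
      (ae_of_all _ fun a => by
        have := (hF_lip a).dist_le_mul z x
        rw [Real.dist_eq] at this
        simp only [Pi.add_apply, Real.norm_eq_abs]
        linarith [abs_sub_abs_le_abs_sub (F z a) (F x a)])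
  have hslope : ∀ z, slope (fun z => ∫ a, F z a ∂μ) x z = ∫ a, slope (F · a) x z ∂μ := by
    intro z
    simp only [slope_def_field]
    rw [← integral_sub (hF_int' z) hF_int, integral_div]
  simp only [hasDerivWithinAt_iff_tendsto_slope] at hF' ⊢
  simp only [funext hslope]
  refine tendsto_integral_filter_of_dominated_convergence (fun _ => (C : ℝ))
    (Eventually.of_forall fun z => ?_) (Eventually.of_forall fun z => ae_of_all _ fun a => ?_)
    (integrable_const _) (ae_of_all _ hF')
  · simp only [slope_def_field]
    exact ((hF_meas z).sub (hF_meas x)).mul_const _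
  · rw [slope_def_field, Real.norm_eq_abs, abs_div]
    rcases eq_or_ne z x with rfl | hzx
    · simp
    · rw [div_le_iff₀ (abs_pos.2 (sub_ne_zero.2 hzx))]
      simpa [Real.dist_eq] using (hF_lip a).dist_le_mul z x

theorem tendsto_integral_max_sub_atTop {α : Type*} [MeasurableSpace α] {μ : Measure α}
    {f : α → ℝ} (hf : Integrable f μ) :
    Tendsto (fun x => ∫ a, max (f a - x) 0 ∂μ) atTop (𝓝 0) := by
  have key := tendsto_integral_filter_of_dominated_convergence (μ := μ) (l := atTop)
    (F := fun x a => max (f a - x) 0) (f := fun _ => 0) (fun a => |f a|)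
    (Eventually.of_forall fun x =>
      (hf.aestronglyMeasurable.sub aestronglyMeasurable_const).sup aestronglyMeasurable_const)
    ?_ hf.abs (ae_of_all _ fun a => tendsto_const_nhds.congr' ?_)
  · simpa using key
  · filter_upwards [eventually_ge_atTop 0] with x hx
    refine ae_of_all _ fun a => ?_
    rw [Real.norm_eq_abs, abs_of_nonneg (le_max_right _ _)]
    exact max_le (by linarith [le_abs_self (f a)]) (abs_nonneg _)
  · filter_upwards [eventually_ge_atTop (f a)] with x hx
    exact (max_eq_right (by linarith)).symm

section Kfun

variable {μ : Measure ℝ}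

theorem Kfun_eq_integral_max_sub (μ : Measure ℝ) (x : ℝ) :
    Kfun μ x = (∫ y, max (y - x) 0 ∂μ) - meanM μ := by
  rw [Kfun, ← integral_indicator measurableSet_Ici]
  congr 2 with y
  by_cases h : x ≤ y
  · simp [h]
  · simp [indicator_of_notMem (fun hy => h (mem_Ici.1 hy)), (not_le.1 h).le]

theorem neg_meanM_le_Kfun (μ : Measure ℝ) (x : ℝ) : -meanM μ ≤ Kfun μ x := by
  rw [Kfun_eq_integral_max_sub]
  have : 0 ≤ ∫ y, max (y - x) 0 ∂μ := integral_nonneg fun y => le_max_right (y - x) 0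
  linarith

theorem lipschitzWith_Kfun [IsProbabilityMeasure μ] (hμ : Integrable (fun y : ℝ => y) μ) :
    LipschitzWith 1 (Kfun μ) := by
  refine LipschitzWith.of_dist_le_mul fun a b => ?_
  have hint : ∀ x, Integrable (fun y : ℝ => max (y - x) 0) μ := fun x =>
    (hμ.sub (integrable_const x)).pos_part
  rw [Kfun_eq_integral_max_sub, Kfun_eq_integral_max_sub, dist_eq_norm, sub_sub_sub_cancel_right,
    ← integral_sub (hint a) (hint b), NNReal.coe_one, one_mul]
  have hle : ∀ y : ℝ, ‖max (y - a) 0 - max (y - b) 0‖ ≤ dist a b := fun y => by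
    simpa [Real.dist_eq, abs_sub_comm] using abs_max_sub_max_le_abs (y - a) (y - b) 0
  simpa using norm_integral_le_of_norm_le_const (μ := μ) (ae_of_all _ hle)

theorem hasDerivWithinAt_max_sub_Iic (x y : ℝ) :
    HasDerivWithinAt (fun z => max (y - z) 0) ((Ici x).indicator (fun _ => -1) y) (Iic x) x := by
  by_cases h : x ≤ y
  · rw [indicator_of_mem (mem_Ici.2 h)]
    refine ((hasDerivAt_id x).const_sub y).hasDerivWithinAt.congr (fun z hz => ?_) ?_
    · exact max_eq_left (by linarith [mem_Iic.1 hz])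
    · exact max_eq_left (by linarith)
  · rw [indicator_of_notMem (fun hy => h (mem_Ici.1 hy))]
    refine ((hasDerivAt_const x (0 : ℝ)).congr_of_eventuallyEq ?_).hasDerivWithinAt
    filter_upwards [Ioi_mem_nhds (not_le.1 h)] with z hz
    exact max_eq_right (by linarith [mem_Ioi.1 hz])

theorem hasDerivWithinAt_Kfun_Iic [IsFiniteMeasure μ] (hμ : Integrable (fun y : ℝ => y) μ)
    (x : ℝ) : HasDerivWithinAt (Kfun μ) (-μ.real (Ici x)) (Iic x) x := by
  have h := hasDerivWithinAt_integral_of_lipschitzWith (μ := μ) (C := 1)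
    (F := fun z y => max (y - z) 0)
    (fun z => (hμ.sub (integrable_const z)).pos_part.aestronglyMeasurable)
    (hμ.sub (integrable_const x)).pos_part
    (fun y => by simpa using ((LipschitzWith.const y).sub LipschitzWith.id).max_const 0)
    (hasDerivWithinAt_max_sub_Iic x)
  rw [integral_indicator_const _ measurableSet_Ici, smul_neg, smul_eq_mul, mul_one] at h
  rw [funext (Kfun_eq_integral_max_sub μ)]
  exact h.sub_const (meanM μ)

theorem eq_of_Kfun_eq {ν : Measure ℝ} [IsFiniteMeasure μ] [IsFiniteMeasure ν]
    (hμ : Integrable (fun y : ℝ => y) μ) (hν : Integrable (fun y : ℝ => y) ν)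
    (h : Kfun μ = Kfun ν) : μ = ν := by
  refine Measure.ext_of_Ici μ ν fun x => ?_
  have := (uniqueDiffWithinAt_Iic x).eq_deriv _ (hasDerivWithinAt_Kfun_Iic hμ x)
    (h ▸ hasDerivWithinAt_Kfun_Iic hν x)
  rw [neg_inj, measureReal_def, measureReal_def] at this
  exact (ENNReal.toReal_eq_toReal_iff' (measure_ne_top _ _) (measure_ne_top _ _)).1 this

end Kfun

section Kfun

variable {μ : Measure ℝ}

theorem tendsto_Kfun_atTop (hμ : Integrable (fun y : ℝ => y) μ) :
    Tendsto (Kfun μ) atTop (𝓝 (-meanM μ)) := by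
  rw [funext (Kfun_eq_integral_max_sub μ), ← zero_sub]
  exact (tendsto_integral_max_sub_atTop hμ).sub_const _

theorem Kfun_add_self [IsProbabilityMeasure μ] (hμ : Integrable (fun y : ℝ => y) μ) (x : ℝ) :
    Kfun μ x + x = ∫ y, max (x - y) 0 ∂μ := by
  have hsplit : ∀ y : ℝ, max (y - x) 0 = (y - x) + max (x - y) 0 := fun y => by
    rcases le_total x y with h | h
    · rw [max_eq_left (by linarith), max_eq_right (by linarith)]; ring
    · rw [max_eq_right (by linarith), max_eq_left (by linarith)]; ring
  have hint : Integrable (fun y : ℝ => y - x) μ := hμ.sub (integrable_const x)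
  have hint' : Integrable (fun y : ℝ => max (x - y) 0) μ := ((integrable_const x).sub hμ).pos_part
  rw [Kfun_eq_integral_max_sub, funext hsplit, integral_add hint hint',
    integral_sub hμ (integrable_const x), integral_const, meanM]
  simp only [probReal_univ, one_smul]
  ring

theorem tendsto_Kfun_add_self_atBot [IsProbabilityMeasure μ]
    (hμ : Integrable (fun y : ℝ => y) μ) :
    Tendsto (fun x => Kfun μ x + x) atBot (𝓝 0) := by
  have h : ∀ x, Kfun μ x + x = ∫ y, max (-y - -x) 0 ∂μ := fun x => by
    simp only [Kfun_add_self hμ, neg_sub_neg]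
  simp only [h]
  exact (tendsto_integral_max_sub_atTop hμ.neg).comp tendsto_neg_atBot_atTop

theorem Kfun_eq_setIntegral_sub [IsFiniteMeasure μ] (hμ : Integrable (fun y : ℝ => y) μ)
    (x : ℝ) : Kfun μ x = (∫ y in Ici x, y ∂μ) - x * μ.real (Ici x) - meanM μ := by
  rw [Kfun, integral_sub hμ.integrableOn (integrable_const x), setIntegral_const, smul_eq_mul,
    mul_comm]

end Kfun

theorem exists_gt_measure_Ici_ne_zero {μ : Measure ℝ} {x : ℝ} (hx : μ (Ioi x) ≠ 0) :
    ∃ z, x < z ∧ μ (Ici z) ≠ 0 := by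
  have hlim : Tendsto (fun n : ℕ => x + 1 / ((n : ℝ) + 1)) atTop (𝓝 x) := by
    simpa using tendsto_one_div_add_atTop_nhds_zero_nat.const_add x
  rw [← iUnion_Ici_eq_Ioi_of_lt_of_tendsto (fun n => by simp; positivity) hlim,
    Ne, measure_iUnion_null_iff] at hx
  push Not at hx
  obtain ⟨n, hn⟩ := hx
  exact ⟨x + 1 / ((n : ℝ) + 1), by simp; positivity, hn⟩

theorem coe_lt_rSupE_iff {μ : Measure ℝ} {x : ℝ} : (x : EReal) < rSupE μ ↔ μ (Ioi x) ≠ 0 := by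
  constructor
  · intro hx h0
    obtain ⟨c, hxc, hcr⟩ := EReal.lt_iff_exists_real_btwn.1 hx
    have hc : μ (Ici c) = 0 :=
      measure_mono_null (Ici_subset_Ioi.2 (EReal.coe_lt_coe_iff.1 hxc)) h0
    have : rSupE μ ≤ c := sInf_le ⟨c, hc, rfl⟩
    exact this.not_gt hcr
  · intro hx
    obtain ⟨z, hxz, hz⟩ := exists_gt_measure_Ici_ne_zero hx
    refine (EReal.coe_lt_coe_iff.2 hxz).trans_le (le_sInf ?_)
    rintro _ ⟨w, hw, rfl⟩
    exact EReal.coe_le_coe_iff.2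
      (not_lt.1 fun hwz => hz (measure_mono_null (Ici_subset_Ici.2 hwz.le) hw))

theorem psiWds_eq_top_of_measure_Ioi_eq_zero {μ : Measure ℝ} {x : ℝ} (hx : μ (Ioi x) = 0) :
    psiWds μ x = ⊤ :=
  if_neg (coe_lt_rSupE_iff.not.2 (not_not.2 hx))

theorem measureReal_Ici_pos {μ : Measure ℝ} [IsFiniteMeasure μ] {x : ℝ} (hx : μ (Ioi x) ≠ 0) :
    0 < μ.real (Ici x) :=
  ENNReal.toReal_pos (fun h => hx (measure_mono_null Ioi_subset_Ici_self h)) (measure_ne_top _ _)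

theorem psiWds_eq_Kfun_div_add {μ : Measure ℝ} [IsFiniteMeasure μ]
    (hμ : Integrable (fun y : ℝ => y) μ) {x : ℝ} (hx : μ (Ioi x) ≠ 0) :
    psiWds μ x = ((Kfun μ x / μ.real (Ici x) + x : ℝ) : EReal) := by
  have hP := measureReal_Ici_pos hx
  rw [psiWds, if_pos (coe_lt_rSupE_iff.2 hx), Kfun_eq_setIntegral_sub hμ, ← measureReal_def]
  congr 1
  field_simp
  ring

theorem measureReal_Ici_mul_Kfun_le_of_psiWds_le {μ ν : Measure ℝ} [IsFiniteMeasure μ]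
    [IsFiniteMeasure ν] (hμ : Integrable (fun y : ℝ => y) μ) (hν : Integrable (fun y : ℝ => y) ν)
    {x : ℝ} (hψ : psiWds μ x ≤ psiWds ν x) (hx : ν (Ioi x) ≠ 0) :
    ν.real (Ici x) * Kfun μ x ≤ μ.real (Ici x) * Kfun ν x := by
  have hxμ : μ (Ioi x) ≠ 0 := fun h => by
    rw [psiWds_eq_top_of_measure_Ioi_eq_zero h, psiWds_eq_Kfun_div_add hν hx, top_le_iff] at hψ
    exact EReal.coe_ne_top _ hψ
  rw [psiWds_eq_Kfun_div_add hμ hxμ, psiWds_eq_Kfun_div_add hν hx, EReal.coe_le_coe_iff,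
    add_le_add_iff_right, div_le_div_iff₀ (measureReal_Ici_pos hxμ) (measureReal_Ici_pos hx)] at hψ
  linarith

section Comparison

variable {μ ν : Measure ℝ} [IsProbabilityMeasure μ] [IsProbabilityMeasure ν]

theorem monotone_Kfun_div_Kfun (hμ : Integrable (fun y : ℝ => y) μ)
    (hν : Integrable (fun y : ℝ => y) ν) (hμ0 : meanM μ < 0) (hν0 : meanM ν ≤ 0)
    (hψ : ∀ x, psiWds μ x ≤ psiWds ν x) :
    Monotone fun x => Kfun ν x / Kfun μ x := by
  have hKμ : ∀ x, 0 < Kfun μ x := fun x => by linarith [neg_meanM_le_Kfun μ x]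
  -- `Ψ_ν = ⊤` from the top of the support of `ν` on, so the WDS inequality says nothing there;
  -- this only matters at that point itself, and only if it is an atom of `ν`
  refine monotone_of_hasDerivWithinAt_Iic_nonneg (s := {x | ν (Ioi x) = 0 ∧ ν (Ici x) ≠ 0})
    ((lipschitzWith_Kfun hν).continuous.div (lipschitzWith_Kfun hμ).continuous
      fun x => (hKμ x).ne') ?_
    (fun x _ => (hasDerivWithinAt_Kfun_Iic hν x).div (hasDerivWithinAt_Kfun_Iic hμ x) (hKμ x).ne')
    fun x hx => div_nonneg ?_ (sq_nonneg _)
  · rintro x ⟨hx0, hx⟩ y ⟨hy0, hy⟩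
    exact le_antisymm (not_lt.1 fun h => hx (measure_mono_null (Ici_subset_Ioi.2 h) hy0))
      (not_lt.1 fun h => hy (measure_mono_null (Ici_subset_Ioi.2 h) hx0))
  have key : ν.real (Ici x) * Kfun μ x ≤ μ.real (Ici x) * Kfun ν x := by
    by_cases h : ν (Ioi x) = 0
    · have hνx : ν (Ici x) = 0 := not_not.1 fun h' => hx ⟨h, h'⟩
      rw [measureReal_def, hνx, ENNReal.toReal_zero, zero_mul]
      exact mul_nonneg measureReal_nonneg (by linarith [neg_meanM_le_Kfun ν x])
    · exact measureReal_Ici_mul_Kfun_le_of_psiWds_le hμ hν (hψ x) h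
  linarith

theorem tendsto_Kfun_div_Kfun_atBot (hμ : Integrable (fun y : ℝ => y) μ)
    (hν : Integrable (fun y : ℝ => y) ν) :
    Tendsto (fun x => Kfun ν x / Kfun μ x) atBot (𝓝 1) := by
  have hμ_top : Tendsto (Kfun μ) atBot atTop := by
    simpa using (tendsto_Kfun_add_self_atBot hμ).add_atTop tendsto_neg_atBot_atTop
  have hdiff : Tendsto (fun x => Kfun ν x - Kfun μ x) atBot (𝓝 0) := by
    simpa using (tendsto_Kfun_add_self_atBot hν).sub (tendsto_Kfun_add_self_atBot hμ)
  have h := (hdiff.mul (tendsto_inv_atTop_zero.comp hμ_top)).const_add 1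
  rw [mul_zero, add_zero] at h
  refine h.congr' ?_
  filter_upwards [hμ_top.eventually_gt_atTop 0] with x hx
  simp only [Function.comp_apply]
  field_simp
  ring

theorem eq_of_psiWds_le_of_meanM_eq (hμ : Integrable (fun y : ℝ => y) μ)
    (hν : Integrable (fun y : ℝ => y) ν) (hμ0 : meanM μ < 0) (hmean : meanM μ = meanM ν)
    (hψ : ∀ x, psiWds μ x ≤ psiWds ν x) : μ = ν := by
  have hmono := monotone_Kfun_div_Kfun hμ hν hμ0 (hmean ▸ hμ0.le) hψ
  have htop : Tendsto (fun x => Kfun ν x / Kfun μ x) atTop (𝓝 1) := by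
    have h := (tendsto_Kfun_atTop hν).div (tendsto_Kfun_atTop hμ) (neg_ne_zero.2 hμ0.ne)
    rwa [← hmean, div_self (neg_ne_zero.2 hμ0.ne)] at h
  have hratio : ∀ x, Kfun ν x / Kfun μ x = 1 := fun x =>
    le_antisymm (hmono.ge_of_tendsto htop x)
      (hmono.le_of_tendsto (tendsto_Kfun_div_Kfun_atBot hμ hν) x)
  refine eq_of_Kfun_eq hμ hν (funext fun x => ?_)
  have hKμ : Kfun μ x ≠ 0 := by linarith [neg_meanM_le_Kfun μ x]
  exact ((div_eq_one_iff_eq hKμ).1 (hratio x)).symm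

end Comparison

theorem stmt8 (μ : ℝ → Measure ℝ)
    (hprob : ∀ t, 0 ≤ t → IsProbabilityMeasure (μ t))
    (hint : ∀ t, 0 ≤ t → Integrable (fun y : ℝ => y) (μ t))
    (hneg : ∀ t, 0 ≤ t → meanM (μ t) < 0)
    (hwds : ∀ s t, 0 ≤ s → s ≤ t → ∀ x : ℝ, psiWds (μ s) x ≤ psiWds (μ t) x)
    (hmean : ∀ s t, 0 ≤ s → 0 ≤ t → meanM (μ s) = meanM (μ t)) :
    ∀ s t, 0 ≤ s → 0 ≤ t → μ s = μ t := by
  have hle : ∀ s t, 0 ≤ s → s ≤ t → μ s = μ t := fun s t hs hst =>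
    have := hprob s hs
    have := hprob t (hs.trans hst)
    eq_of_psiWds_le_of_meanM_eq (hint s hs) (hint t (hs.trans hst)) (hneg s hs)
      (hmean s t hs (hs.trans hst)) (hwds s t hs hst)
  intro s t hs ht
  rcases le_total s t with hst | hts
  · exact hle s t hs hst
  · exact (hle t s ht hts).symm
end

section
/- For k ≥ 1 and t ∈ (0,1), the measure μ_t = (1 − t^k + t^{k+1}) δ_{−t^k} + (t^k − t^{k+1}) δ_{1−t^k} satisfies: Ψ^{wds}_{μ_t}(x) = 0 for x ≤ −t^k, Ψ^{wds}_{μ_t}(x) = 1 − t^k + t/(1−t) for −t^k < x < 1−t^k, and Ψ^{wds}_{μ_t}(x) = +∞ for x ≥ 1−t^k. -/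
/-!
`μ_t` is a two-point measure `c δ_a + d δ_b` with `a = -t^k < b = 1 - t^k` and `d = t^k (1 - t) > 0`,
so its right end point is `b` and `Ψ = ⊤` from `b` on. For `x ≤ a` the tail integral over `[x, ∞)` is
the whole mean, so `Ψ(x) = 0`. For `a < x < b` only the atom at `b` is left, so
`Ψ(x) = (d b - (c a + d b)) / d = -c a / d`, which for `c = 1 - t^k + t^(k+1)` is
`1 - t^k + t / (1 - t)`.
-/

open MeasureTheory Set Filter

noncomputable def muD (k : ℕ) (t : ℝ) : Measure ℝ :=
  ENNReal.ofReal (1 - t ^ k + t ^ (k + 1)) • Measure.dirac (-(t ^ k))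
    + ENNReal.ofReal (t ^ k - t ^ (k + 1)) • Measure.dirac (1 - t ^ k)

noncomputable def twoPoint (c a d b : ℝ) : Measure ℝ :=
  ENNReal.ofReal c • Measure.dirac a + ENNReal.ofReal d • Measure.dirac b

section TwoPoint

variable {a b c d x : ℝ}

lemma integral_twoPoint (hc : 0 ≤ c) (hd : 0 ≤ d) (f : ℝ → ℝ) :
    ∫ y, f y ∂twoPoint c a d b = c * f a + d * f b := by
  rw [twoPoint, integral_add_measure, integral_smul_measure, integral_smul_measure,
    integral_dirac, integral_dirac, ENNReal.toReal_ofReal hc, ENNReal.toReal_ofReal hd,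
    smul_eq_mul, smul_eq_mul]
  all_goals exact (integrable_dirac enorm_lt_top).smul_measure ENNReal.ofReal_ne_top

lemma meanM_twoPoint (hc : 0 ≤ c) (hd : 0 ≤ d) : meanM (twoPoint c a d b) = c * a + d * b :=
  integral_twoPoint hc hd id

lemma restrict_Ici_twoPoint_of_le_left (hxa : x ≤ a) (hab : a ≤ b) :
    (twoPoint c a d b).restrict (Ici x) = twoPoint c a d b := by
  simp [twoPoint, Measure.restrict_add, restrict_dirac, hxa, hxa.trans hab]

lemma restrict_Ici_twoPoint_of_lt_of_le (hax : a < x) (hxb : x ≤ b) :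
    (twoPoint c a d b).restrict (Ici x) = ENNReal.ofReal d • Measure.dirac b := by
  simp [twoPoint, Measure.restrict_add, restrict_dirac, hax.not_ge, hxb]

lemma twoPoint_Ici_eq_zero_iff (hd : 0 < d) (hab : a ≤ b) (z : ℝ) :
    twoPoint c a d b (Ici z) = 0 ↔ b < z := by
  rcases lt_or_ge b z with hbz | hzb
  · simp [twoPoint, hbz, (hab.trans_lt hbz).not_ge]
  · simp [twoPoint, hzb, hd, hzb.not_gt]

lemma rSupE_twoPoint (hd : 0 < d) (hab : a ≤ b) : rSupE (twoPoint c a d b) = b := by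
  have : {z | twoPoint c a d b (Ici z) = 0} = Ioi b := by
    ext z; exact twoPoint_Ici_eq_zero_iff hd hab z
  rw [rSupE, this, EReal.image_coe_Ioi, csInf_Ioo (EReal.coe_lt_top b)]

lemma psiWds_twoPoint_of_le_left (hd : 0 < d) (hxa : x ≤ a) (hab : a < b) :
    psiWds (twoPoint c a d b) x = (0 : ℝ) := by
  have hx : (x : EReal) < rSupE (twoPoint c a d b) := by
    rw [rSupE_twoPoint hd hab.le]; exact_mod_cast hxa.trans_lt hab
  rw [psiWds, if_pos hx, restrict_Ici_twoPoint_of_le_left hxa hab.le, meanM, sub_self,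
    zero_div]

lemma psiWds_twoPoint_of_lt_of_lt (hc : 0 ≤ c) (hd : 0 < d) (hax : a < x) (hxb : x < b) :
    psiWds (twoPoint c a d b) x = (-(c * a) / d : ℝ) := by
  have hx : (x : EReal) < rSupE (twoPoint c a d b) := by
    rw [rSupE_twoPoint hd (hax.trans hxb).le]; exact_mod_cast hxb
  have hmass : twoPoint c a d b (Ici x) = ENNReal.ofReal d := by
    rw [← Measure.restrict_apply_univ, restrict_Ici_twoPoint_of_lt_of_le hax hxb.le]
    simp
  rw [psiWds, if_pos hx, restrict_Ici_twoPoint_of_lt_of_le hax hxb.le, hmass,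
    meanM_twoPoint hc hd.le, integral_smul_measure, integral_dirac,
    ENNReal.toReal_ofReal hd.le, smul_eq_mul]
  congr 2; ring

lemma psiWds_twoPoint_of_right_le (hd : 0 < d) (hab : a ≤ b) (hbx : b ≤ x) :
    psiWds (twoPoint c a d b) x = ⊤ := by
  rw [psiWds, if_neg]
  rw [rSupE_twoPoint hd hab]
  exact_mod_cast hbx.not_gt

end TwoPoint

theorem stmt16_general (k : ℕ) (t : ℝ) (ht : t ∈ Ioo (0 : ℝ) 1) (x : ℝ) :
    (x ≤ -(t ^ k) → psiWds (muD k t) x = (0 : ℝ)) ∧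
    (-(t ^ k) < x → x < 1 - t ^ k →
      psiWds (muD k t) x = ((1 - t ^ k + t / (1 - t) : ℝ) : EReal)) ∧
    (1 - t ^ k ≤ x → psiWds (muD k t) x = ⊤) := by
  obtain ⟨ht0, ht1⟩ := ht
  have hp0 : 0 < t ^ k := pow_pos ht0 k
  have hp1 : t ^ k ≤ 1 := pow_le_one₀ ht0.le ht1.le
  have hc : 0 ≤ 1 - t ^ k + t ^ (k + 1) := by rw [pow_succ]; nlinarith
  have hd : 0 < t ^ k - t ^ (k + 1) := by rw [pow_succ]; nlinarith
  have hab : -(t ^ k) < 1 - t ^ k := by linarith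
  have hmu : muD k t = twoPoint _ _ _ _ := rfl
  refine ⟨fun hx => ?_, fun hx hx' => ?_, fun hx => ?_⟩
  · rw [hmu, psiWds_twoPoint_of_le_left hd hx hab]
  · rw [hmu, psiWds_twoPoint_of_lt_of_lt hc hd hx hx']
    congr 1
    have : 1 - t ≠ 0 := by linarith
    rw [pow_succ]
    field_simp
    ring
  · rw [hmu, psiWds_twoPoint_of_right_le hd hab.le hx]

theorem stmt16 (k : ℕ) (hk : 1 ≤ k) (t : ℝ) (ht : t ∈ Ioo (0 : ℝ) 1) (x : ℝ) :
    (x ≤ -(t ^ k) → psiWds (muD k t) x = (0 : ℝ)) ∧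
    (-(t ^ k) < x → x < 1 - t ^ k →
      psiWds (muD k t) x = ((1 - t ^ k + t / (1 - t) : ℝ) : EReal)) ∧
    (1 - t ^ k ≤ x → psiWds (muD k t) x = ⊤) :=
  stmt16_general k t ht x
end
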